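/- arXiv:1910.00644 — 2 statements merged into one kernel-verified Lean document; each statement's English description precedes it below -/
import Mathlib

section
/- Let K ⊆ L be finite fields of characteristic p with |K| = q = p^f and [L : K] = m ≥ 2, and suppose there exists a primitive prime divisor r of p^{fm} − 1, i.e. a prime r dividing p^{fm} − 1 such that r does not divide p^i − 1 for 1 ≤ i < fm. Let G = Lˣ ⋊ Gal(L/K) and let Z be the central subgroup of G given by the image of Kˣ (scalars) inside the canonical copy of Lˣ. Suppose A is a nilpotent subgroup of G containing Z which is transitive on the 1-dimensional K-subspaces of L, i.e. for all nonzero x, y ∈ L there exists (a, σ) ∈ A such that the K-span of a·σ(x) equals the K-span of y. Then A equals the image of Lˣ in G; in particular A/Z is cyclic of order (q^m − 1)/(q − 1). -/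
/-!
The scalars in `A` upgrade transitivity on lines to transitivity on `Lˣ`, so `r ∣ qᵐ - 1`
divides `|A|`. As `A` is nilpotent, its normal Sylow `r`-subgroup meets the centre, which yields
a central element `z` of order `r`. Fermat's little theorem and primitivity give `r > fm ≥ m`, and
`|Gal(L/K)| = m`, so `z` has trivial Galois part: `z` is a unit `u` of order `r`. The Galois part of
any element of `A` fixes `u`, and `u` lies in no proper subfield of `L` because `r` is primitive;
hence `A ≤ Lˣ`, and transitivity gives equality.
-/

def galUnitsHom (K L : Type*) [Field K] [Field L] [Algebra K L] :
    (L ≃ₐ[K] L) →* MulAut Lˣ where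
  toFun σ := Units.mapEquiv σ.toRingEquiv.toMulEquiv
  map_one' := by ext u; rfl
  map_mul' σ τ := by ext u; rfl

theorem Nat.lt_of_primitive_prime_divisor {p r n : ℕ} (hp : 0 < p) (hr : r.Prime)
    (hdvd : r ∣ p ^ n - 1) (hppd : ∀ i : ℕ, 1 ≤ i → i < n → ¬ r ∣ p ^ i - 1) : n < r := by
  by_contra! hrn
  have hr2 := hr.two_le
  have hrp : ¬ r ∣ p := fun h => hr.one_lt.ne' <| Nat.eq_one_of_dvd_one <| by
    have hpn : r ∣ p ^ n := dvd_pow h (by omega)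
    simpa [Nat.sub_sub_self (Nat.one_le_pow n p hp)] using Nat.dvd_sub hpn hdvd
  have hfermat : r ∣ p ^ (r - 1) - 1 := by
    have := Nat.ModEq.pow_totient (Nat.coprime_comm.mp (hr.coprime_iff_not_dvd.mpr hrp))
    rw [Nat.totient_prime hr] at this
    exact (Nat.modEq_iff_dvd' (Nat.one_le_pow _ _ hp)).mp this.symm
  exact hppd (r - 1) (by omega) (by omega) hfermat

open scoped commutatorElement in
theorem Subgroup.Normal.inf_center_ne_bot {G : Type*} [Group G] [Group.IsNilpotent G]
    {H : Subgroup G} (hH : H.Normal) (hne : H ≠ ⊥) : H ⊓ center G ≠ ⊥ := by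
  intro hHZ
  have hseries : ∀ n, H ⊓ upperCentralSeries G n = ⊥ := by
    intro n
    induction n with
    | zero => simp
    | succ n ih =>
      refine eq_bot_iff.mpr fun x ⟨hxH, hxn⟩ => hHZ ▸ ⟨hxH, mem_center_iff.mpr fun y => ?_⟩
      have hcomm : ⁅x, y⁆ ∈ H ⊓ upperCentralSeries G n :=
        ⟨commutator_le_left H ⊤ (commutator_mem_commutator hxH (mem_top y)),
          mem_upperCentralSeries_succ_iff.mp hxn y⟩
      rw [ih, mem_bot, commutatorElement_eq_one_iff_mul_comm] at hcomm
      exact hcomm.symm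
  obtain ⟨n, hn⟩ := Group.IsNilpotent.nilpotent (G := G)
  exact hne (by simpa [hn] using hseries n)

theorem Group.IsNilpotent.exists_mem_center_orderOf_eq {G : Type*} [Group G] [Finite G]
    [Group.IsNilpotent G] {r : ℕ} [Fact r.Prime] (hr : r ∣ Nat.card G) :
    ∃ z ∈ Subgroup.center G, orderOf z = r := by
  let P : Sylow r G := default
  have hPZ : (P : Subgroup G) ⊓ Subgroup.center G ≠ ⊥ :=
    (inferInstance : (P : Subgroup G).Normal).inf_center_ne_bot (P.ne_bot_of_dvd_card hr)
  have hrPZ : r ∣ Nat.card ↥((P : Subgroup G) ⊓ Subgroup.center G) :=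
    (P.isPGroup'.to_inf_left.card_eq_or_dvd).resolve_left (Subgroup.card_eq_one.not.mpr hPZ)
  obtain ⟨z, hz⟩ := exists_prime_orderOf_dvd_card' r hrPZ
  exact ⟨z, z.2.2, by rwa [Subgroup.orderOf_coe]⟩

theorem MulAction.natCard_dvd_of_isPretransitive (G X : Type*) [Group G] [MulAction G X]
    [MulAction.IsPretransitive G X] [Nonempty X] : Nat.card X ∣ Nat.card G :=
  index_stabilizer_of_transitive G (Classical.arbitrary X) ▸ Subgroup.index_dvd_card _

namespace SemidirectProduct

variable {N G : Type*} [Group N] [Group G] {φ : G →* MulAut N}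

instance : MulAction (N ⋊[φ] G) N where
  smul g n := g.left * φ g.right n
  one_smul n := show 1 * φ 1 n = n by simp
  mul_smul g h n := show _ * _ = _ * φ _ (_ * _) by simp [mul_assoc]

instance [Finite N] [Finite G] : Finite (N ⋊[φ] G) := Finite.of_equiv _ equivProd.symm

theorem smul_def (g : N ⋊[φ] G) (n : N) : g • n = g.left * φ g.right n := rfl

theorem exists_inl_eq_of_coprime [Finite G] {g : N ⋊[φ] G}
    (hg : (orderOf g).Coprime (Nat.card G)) : ∃ n, inl n = g ∧ orderOf n = orderOf g := by
  have hright : g.right = 1 := orderOf_eq_one_iff.mp <|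
    Nat.eq_one_of_dvd_coprimes hg (orderOf_map_dvd rightHom g) (orderOf_dvd_natCard g.right)
  have hinl : inl g.left = g := by ext <;> simp [hright]
  exact ⟨g.left, hinl, hinl ▸ (orderOf_injective inl inl_injective g.left).symm⟩

theorem mem_range_inl_iff {g : N ⋊[φ] G} : g ∈ (inl : N →* N ⋊[φ] G).range ↔ g.right = 1 := by
  rw [range_inl_eq_ker_rightHom, MonoidHom.mem_ker, rightHom_eq_right]

theorem commute_inl_iff {N : Type*} [CommGroup N] {φ : G →* MulAut N} {g : N ⋊[φ] G} {n : N} :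
    Commute g (inl n) ↔ φ g.right n = n := by
  simp [Commute, SemiconjBy, SemidirectProduct.ext_iff, mul_comm n]

theorem eq_range_inl_of_isPretransitive {A : Subgroup (N ⋊[φ] G)}
    (hA : A ≤ (inl : N →* N ⋊[φ] G).range) [MulAction.IsPretransitive A N] :
    A = (inl : N →* N ⋊[φ] G).range := by
  refine le_antisymm hA ?_
  rintro _ ⟨n, rfl⟩
  obtain ⟨a, han⟩ := MulAction.exists_smul_eq A 1 n
  obtain ⟨m, hm⟩ := hA a.2
  have hmn : m = n := by simpa [← hm, Subgroup.smul_def, smul_def] using han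
  exact hmn ▸ hm ▸ a.2

end SemidirectProduct

section FiniteField

variable {K L : Type*} [Field K] [Field L] [Algebra K L] [Fintype K] [Finite L]

theorem IntermediateField.orderOf_dvd_card_pow_finrank_sub_one (F : IntermediateField K L)
    {u : Lˣ} (hu : (u : L) ∈ F) : orderOf u ∣ Fintype.card K ^ Module.finrank K F - 1 := by
  let := Fintype.ofFinite F
  have hpow := FiniteField.pow_card_sub_one_eq_one (⟨u, hu⟩ : F) (Subtype.coe_ne_coe.mp (by simp))
  rw [Module.card_eq_pow_finrank (K := K)] at hpow
  exact orderOf_dvd_of_pow_eq_one (Units.ext (congrArg Subtype.val hpow))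

theorem IntermediateField.eq_top_of_dvd_orderOf {r : ℕ}
    (hppd : ∀ d, 0 < d → d < Module.finrank K L → ¬ r ∣ Fintype.card K ^ d - 1)
    (F : IntermediateField K L) {u : Lˣ} (hu : (u : L) ∈ F) (hr : r ∣ orderOf u) : F = ⊤ := by
  refine IntermediateField.eq_of_le_of_finrank_le le_top ?_
  rw [IntermediateField.finrank_top']
  by_contra! hlt
  exact hppd _ Module.finrank_pos hlt (hr.trans (F.orderOf_dvd_card_pow_finrank_sub_one hu))

theorem AlgEquiv.eq_one_of_apply_eq_self_of_dvd_orderOf {r : ℕ}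
    (hppd : ∀ d, 0 < d → d < Module.finrank K L → ¬ r ∣ Fintype.card K ^ d - 1)
    {u : Lˣ} (hr : r ∣ orderOf u) {σ : L ≃ₐ[K] L} (hσ : σ u = u) : σ = 1 := by
  have hadjoin : Algebra.adjoin K {(u : L)} = ⊤ := by
    rw [← IntermediateField.adjoin_simple_toSubalgebra_of_isAlgebraic
        (Algebra.IsAlgebraic.isAlgebraic _),
      IntermediateField.eq_top_of_dvd_orderOf hppd _ (IntermediateField.mem_adjoin_simple_self K _) hr,
      IntermediateField.top_toSubalgebra]
  ext x
  exact congrArg (· x) <| AlgHom.ext_of_adjoin_eq_top hadjoin (φ₁ := (σ : L →ₐ[K] L))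
    (φ₂ := AlgHom.id K L) (by simpa using hσ)

end FiniteField

theorem isPretransitive_units_of_forall_span_eq {K L : Type*} [Field K] [Field L] [Algebra K L]
    {A : Subgroup (Lˣ ⋊[galUnitsHom K L] (L ≃ₐ[K] L))}
    (hZ : ((SemidirectProduct.inl : Lˣ →* Lˣ ⋊[galUnitsHom K L] (L ≃ₐ[K] L)).comp
      (Units.map (algebraMap K L).toMonoidHom)).range ≤ A)
    (htrans : ∀ x y : L, x ≠ 0 → y ≠ 0 → ∃ g ∈ A,
      Submodule.span K {(g.left : L) * g.right x} = Submodule.span K {y}) :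
    MulAction.IsPretransitive A Lˣ := by
  refine (MulAction.isPretransitive_iff_base 1).mpr fun w => ?_
  obtain ⟨g, hgA, hspan⟩ := htrans 1 w one_ne_zero w.ne_zero
  obtain ⟨c, hc⟩ := Submodule.span_singleton_eq_span_singleton.mp hspan
  refine ⟨⟨_, mul_mem (hZ ⟨c, rfl⟩) hgA⟩, Units.ext ?_⟩
  rw [Subgroup.mk_smul, SemidirectProduct.smul_def, SemidirectProduct.mul_left,
    MonoidHom.comp_apply, SemidirectProduct.left_inl, SemidirectProduct.right_inl]
  simpa [galUnitsHom, Units.smul_def, Algebra.smul_def] using hc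

theorem nilpotent_line_transitive_eq_units_general {K L : Type*} [Field K] [Field L]
    [Algebra K L] [Fintype K] [Fintype L] (p f q m r : ℕ)
    (hp : p.Prime) (hf : 0 < f) (hqf : q = p ^ f)
    (hq : Fintype.card K = q) (hm : Module.finrank K L = m)
    (hr : r.Prime) (hrdvd : r ∣ p ^ (f * m) - 1)
    (hppd : ∀ i : ℕ, 1 ≤ i → i < f * m → ¬ r ∣ p ^ i - 1)
    (A : Subgroup (Lˣ ⋊[galUnitsHom K L] (L ≃ₐ[K] L)))
    (hZ : ((SemidirectProduct.inl :
            Lˣ →* Lˣ ⋊[galUnitsHom K L] (L ≃ₐ[K] L)).comp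
          (Units.map (algebraMap K L).toMonoidHom)).range ≤ A)
    (hnilp : Group.IsNilpotent ↥A)
    (htrans : ∀ x y : L, x ≠ 0 → y ≠ 0 → ∃ g ∈ A,
      Submodule.span K {(g.left : L) * g.right x} = Submodule.span K {y}) :
    A = (SemidirectProduct.inl :
          Lˣ →* Lˣ ⋊[galUnitsHom K L] (L ≃ₐ[K] L)).range := by
  have : Fact r.Prime := ⟨hr⟩
  have hfm_lt : f * m < r := Nat.lt_of_primitive_prime_divisor hp.pos hr hrdvd hppd
  have hppd_K (d : ℕ) (hd : 0 < d) (hdm : d < Module.finrank K L) :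
      ¬ r ∣ Fintype.card K ^ d - 1 := by
    rw [hq, hqf, ← pow_mul]
    exact hppd _ (Nat.mul_pos hf hd) (Nat.mul_lt_mul_left hf |>.mpr (hm ▸ hdm))
  have : MulAction.IsPretransitive A Lˣ := isPretransitive_units_of_forall_span_eq hZ htrans
  have hrA : r ∣ Nat.card A := by
    refine dvd_trans ?_ (MulAction.natCard_dvd_of_isPretransitive A Lˣ)
    rwa [Nat.card_units, Nat.card_eq_fintype_card, Module.card_eq_pow_finrank (K := K), hq, hm,
      hqf, ← pow_mul]
  obtain ⟨z, hzc, hzr⟩ := hnilp.exists_mem_center_orderOf_eq hrA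
  have hr_coprime : r.Coprime (Nat.card (L ≃ₐ[K] L)) := by
    rw [IsGalois.card_aut_eq_finrank]
    exact hr.coprime_iff_not_dvd.mpr <| Nat.not_dvd_of_pos_of_lt Module.finrank_pos <|
      hm ▸ (Nat.le_mul_of_pos_left m hf).trans_lt hfm_lt
  obtain ⟨u, hzu, hur⟩ := SemidirectProduct.exists_inl_eq_of_coprime
    (g := (z : Lˣ ⋊[galUnitsHom K L] (L ≃ₐ[K] L))) (by rwa [Subgroup.orderOf_coe, hzr])
  refine SemidirectProduct.eq_range_inl_of_isPretransitive fun a ha => ?_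
  have hcomm : Commute a (SemidirectProduct.inl u) :=
    hzu ▸ congrArg Subtype.val (Subgroup.mem_center_iff.mp hzc ⟨a, ha⟩)
  exact SemidirectProduct.mem_range_inl_iff.mpr <|
    AlgEquiv.eq_one_of_apply_eq_self_of_dvd_orderOf hppd_K
      (by rw [hur, Subgroup.orderOf_coe, hzr]) (congrArg Units.val
        (SemidirectProduct.commute_inl_iff.mp hcomm))

/-- Lemma 6.3, main case (stated via preimages): let `L/K` be a degree-`m ≥ 2`
extension of finite fields with `|K| = q`, `p` the characteristic and `q = pᶠ`,
and suppose `p^(fm) - 1` has a primitive prime divisor. If `A` is a nilpotent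
subgroup of `ΓL₁(qᵐ) = Lˣ ⋊ Gal(L/K)` containing the central subgroup `Z` of
scalars (the image of `Kˣ`) and transitive on the 1-dimensional `K`-subspaces
of `L`, then `A` is the canonical copy of `Lˣ`. -/
theorem nilpotent_line_transitive_eq_units {K L : Type*} [Field K] [Field L]
    [Algebra K L] [Fintype K] [Fintype L] (p f q m r : ℕ)
    (hp : p.Prime) (hchar : CharP K p) (hf : 0 < f) (hqf : q = p ^ f)
    (hq : Fintype.card K = q) (hm : Module.finrank K L = m) (hm2 : 2 ≤ m)
    (hr : r.Prime) (hrdvd : r ∣ p ^ (f * m) - 1)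
    (hppd : ∀ i : ℕ, 1 ≤ i → i < f * m → ¬ r ∣ p ^ i - 1)
    (A : Subgroup (Lˣ ⋊[galUnitsHom K L] (L ≃ₐ[K] L)))
    (hZ : ((SemidirectProduct.inl :
            Lˣ →* Lˣ ⋊[galUnitsHom K L] (L ≃ₐ[K] L)).comp
          (Units.map (algebraMap K L).toMonoidHom)).range ≤ A)
    (hnilp : Group.IsNilpotent ↥A)
    (htrans : ∀ x y : L, x ≠ 0 → y ≠ 0 → ∃ g ∈ A,
      Submodule.span K {(g.left : L) * g.right x} = Submodule.span K {y}) :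
    A = (SemidirectProduct.inl :
          Lˣ →* Lˣ ⋊[galUnitsHom K L] (L ≃ₐ[K] L)).range :=
  nilpotent_line_transitive_eq_units_general p f q m r hp hf hqf hq hm hr hrdvd hppd A hZ hnilp
    htrans
end

section
/- Let q be a Mersenne prime (a prime such that q + 1 is a power of 2), and let K ⊆ L be finite fields with |K| = q and [L : K] = 2. Let G = Lˣ ⋊ Gal(L/K) and let Z be the image of Kˣ inside the canonical copy of Lˣ in G. Then there exists a nilpotent subgroup A of G with Z ≤ A, of order q² − 1, not contained in the image of Lˣ, which is transitive on the 1-dimensional K-subspaces of L: for all nonzero x, y ∈ L there exists (a, σ) ∈ A such that the K-span of a·σ(x) equals the K-span of y. -/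
/-! Let `χ` be the quadratic character of `Lˣ` and `ε : Gal(L/K) ≃* {±1}`. Since `χ` is
Galois-invariant, `(u, τ) ↦ χ(u) ε(τ)` is a homomorphism on `Lˣ ⋊ Gal(L/K)`; its kernel
`A = {(u, τ) | u is a square ↔ τ = 1}` has index 2, hence order `q² - 1`, and acts simply
transitively on `Lˣ`: to send `x` to `y`, pick `τ` with `ε(τ) = χ(y / x)` and `u = y / τ(x)`.
As `[L : K] = 2`, every element of `K` is a square in `L`, so the central scalars `Kˣ` lie in `A`,
and `A / Kˣ` has order `q + 1 = 2 ^ k`; a central extension of a 2-group is nilpotent. -/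

namespace SemidirectProduct

variable {N H M : Type*} [Group N] [Group H] [CommGroup M] {φ : H →* MulAut N}

instance [Finite N] [Finite H] : Finite (N ⋊[φ] H) :=
  Finite.of_equiv _ equivProd.symm

/-- Into a commutative group, the compatibility condition of `lift` is `φ`-invariance of `χ`. -/
def liftComm (χ : N →* M) (ε : H →* M) (hχ : ∀ h n, χ (φ h n) = χ n) : N ⋊[φ] H →* M :=
  lift χ ε fun h ↦ by ext n; simp [hχ]

variable {χ : N →* M} {ε : H →* M} {hχ : ∀ h n, χ (φ h n) = χ n}

theorem liftComm_apply (g : N ⋊[φ] H) : liftComm χ ε hχ g = χ g.left * ε g.right := rfl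

theorem liftComm_inl (n : N) : liftComm χ ε hχ (inl n) = χ n :=
  lift_inl _ _ _ n

theorem liftComm_surjective (hε : Function.Surjective ε) :
    Function.Surjective (liftComm χ ε hχ) := fun m ↦
  let ⟨h, hh⟩ := hε m
  ⟨inr h, by simp [liftComm, hh]⟩

theorem card_ker_liftComm_mul (hε : Function.Surjective ε) :
    Nat.card (liftComm χ ε hχ).ker * Nat.card M = Nat.card N * Nat.card H := by
  have := (liftComm χ ε hχ).ker.card_mul_index
  rwa [Subgroup.index_ker, MonoidHom.range_eq_top.mpr (liftComm_surjective hε), Subgroup.card_top,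
    card] at this

theorem exists_mem_ker_liftComm_left_mul_eq (hε : Function.Surjective ε) (x y : N) :
    ∃ g ∈ (liftComm χ ε hχ).ker, g.left * φ g.right x = y := by
  obtain ⟨h, hh⟩ := hε (χ y * (χ x)⁻¹)⁻¹
  refine ⟨⟨y * (φ h x)⁻¹, h⟩, ?_, inv_mul_cancel_right y _⟩
  rw [MonoidHom.mem_ker, liftComm_apply, map_mul, map_inv, hχ, hh, mul_inv_cancel]

theorem exists_mem_ker_liftComm_right_eq (hχs : Function.Surjective χ) (h : H) :
    ∃ g ∈ (liftComm χ ε hχ).ker, g.right = h := by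
  obtain ⟨n, hn⟩ := hχs (ε h)⁻¹
  exact ⟨⟨n, h⟩, by rw [MonoidHom.mem_ker, liftComm_apply, hn, inv_mul_cancel], rfl⟩

theorem ker_liftComm_not_le_range_inl [Nontrivial H] (hχs : Function.Surjective χ) :
    ¬ (liftComm χ ε hχ).ker ≤ (inl : N →* N ⋊[φ] H).range := by
  obtain ⟨h, hh⟩ := exists_ne (1 : H)
  obtain ⟨g, hg, rfl⟩ := exists_mem_ker_liftComm_right_eq (ε := ε) (hχ := hχ) hχs h
  intro hle
  obtain ⟨n, rfl⟩ := hle hg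
  exact hh (right_inl n)

omit [CommGroup M] in
theorem inl_mem_center {n : N} (hn : n ∈ Subgroup.center N) (hfix : ∀ h, φ h n = n) :
    inl n ∈ Subgroup.center (N ⋊[φ] H) := by
  rw [Subgroup.mem_center_iff]
  intro g
  ext <;> simp [hfix, Subgroup.mem_center_iff.mp hn]

end SemidirectProduct

theorem isNilpotent_of_le_center_of_card_eq {G : Type*} [Group G] [Finite G]
    {Z : Subgroup G} (hZ : Z ≤ Subgroup.center G) {p k : ℕ} [Fact p.Prime]
    (hcard : Nat.card G = p ^ k * Nat.card Z) : Group.IsNilpotent G := by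
  have : Z.Normal :=
    ⟨fun n hn g ↦ by rwa [Subgroup.mem_center_iff.mp (hZ hn) g, mul_inv_cancel_right]⟩
  have hQ : IsPGroup p (G ⧸ Z) := IsPGroup.of_card (n := k) <|
    Nat.eq_of_mul_eq_mul_right Nat.card_pos
      (by rw [← hcard, Z.card_eq_card_quotient_mul_card_subgroup])
  have := hQ.isNilpotent
  exact Subgroup.isNilpotent_of_ker_le_center (QuotientGroup.mk' Z) (by rwa [QuotientGroup.ker_mk'])

theorem quadraticChar_ringEquiv_apply {F : Type*} [Field F] [Fintype F] [DecidableEq F]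
    (τ : F ≃+* F) (a : F) : quadraticChar F (τ a) = quadraticChar F a := by
  have hsq : IsSquare (τ a) ↔ IsSquare a :=
    ⟨fun h ↦ by simpa using h.map τ.symm, fun h ↦ h.map τ⟩
  simp only [quadraticChar_apply, quadraticCharFun, map_eq_zero_iff τ τ.injective, hsq]

theorem FiniteField.card_eq_sq_of_finrank_eq_two {K L : Type*} [Field K] [Field L] [Algebra K L]
    [Fintype K] [Fintype L] (hdeg : Module.finrank K L = 2) :
    Fintype.card L = Fintype.card K ^ 2 := by
  rw [Module.card_eq_pow_finrank (K := K), hdeg]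

theorem FiniteField.isSquare_algebraMap_of_finrank_eq_two {K L : Type*} [Field K] [Field L]
    [Algebra K L] [Fintype K] [Fintype L] (hdeg : Module.finrank K L = 2) (c : K) :
    IsSquare (algebraMap K L c) := by
  by_cases hL : ringChar L = 2
  · exact FiniteField.isSquare_of_char_two hL _
  rcases eq_or_ne c 0 with rfl | hc
  · simp
  have hcardL := FiniteField.card_eq_sq_of_finrank_eq_two hdeg
  obtain ⟨t, ht⟩ : Odd (Fintype.card K) := by
    have := Nat.odd_iff.mpr (FiniteField.odd_card_of_char_ne_two hL)
    rw [hcardL] at this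
    exact (Nat.odd_pow_iff two_ne_zero).mp this
  -- Euler's criterion: `c ^ (q² / 2) = (c ^ (q - 1)) ^ ((q + 1) / 2) = 1`.
  have hexp : Fintype.card L / 2 = (Fintype.card K - 1) * (t + 1) := by
    rw [hcardL, ht, Nat.add_sub_cancel, show (2 * t + 1) ^ 2 = 1 + 2 * (2 * t * (t + 1)) by ring,
      Nat.add_mul_div_left _ _ two_pos, Nat.div_eq_of_lt one_lt_two, zero_add]
  rw [FiniteField.isSquare_iff hL ((map_ne_zero _).mpr hc), hexp, pow_mul, ← map_pow,
    FiniteField.pow_card_sub_one_eq_one c hc, map_one, one_pow]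

theorem quadraticChar_toUnitHom_surjective {F : Type*} [Field F] [Fintype F] [DecidableEq F]
    (hF : ringChar F ≠ 2) : Function.Surjective (quadraticChar F).toUnitHom := by
  intro u
  rcases Int.units_eq_one_or u with rfl | rfl
  · exact ⟨1, map_one _⟩
  · obtain ⟨a, ha⟩ := quadraticChar_exists_neg_one' hF
    exact ⟨a, Units.ext (by rw [MulChar.coe_toUnitHom, ha, Units.val_neg, Units.val_one])⟩

section QuadraticExtension

variable {K L : Type*} [Field K] [Field L] [Algebra K L]

variable (K L) in
def scalarSubgroup : Subgroup (Lˣ ⋊[galUnitsHom K L] (L ≃ₐ[K] L)) :=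
  ((SemidirectProduct.inl : Lˣ →* Lˣ ⋊[galUnitsHom K L] (L ≃ₐ[K] L)).comp
    (Units.map (algebraMap K L).toMonoidHom)).range

theorem scalarSubgroup_le_center :
    scalarSubgroup K L ≤ Subgroup.center (Lˣ ⋊[galUnitsHom K L] (L ≃ₐ[K] L)) := by
  rintro _ ⟨c, rfl⟩
  exact SemidirectProduct.inl_mem_center (Subgroup.mem_center_iff.mpr fun _ ↦ mul_comm _ _)
    fun τ ↦ Units.ext (τ.commutes c)

theorem card_scalarSubgroup [Fintype K] :
    Nat.card (scalarSubgroup K L) = Fintype.card K - 1 := by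
  have hinj : Function.Injective ((SemidirectProduct.inl :
      Lˣ →* Lˣ ⋊[galUnitsHom K L] (L ≃ₐ[K] L)).comp (Units.map (algebraMap K L).toMonoidHom)) :=
    SemidirectProduct.inl_injective.comp (Units.map_injective (algebraMap K L).injective)
  rw [scalarSubgroup, ← Nat.card_congr (MonoidHom.ofInjective hinj).toEquiv, Nat.card_units,
    Nat.card_eq_fintype_card]

theorem card_algEquiv_of_finrank_eq_two [Finite L] (hdeg : Module.finrank K L = 2) :
    Nat.card (L ≃ₐ[K] L) = 2 := by
  rw [IsGalois.card_aut_eq_finrank, hdeg]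

noncomputable def galSign [Finite L] (hdeg : Module.finrank K L = 2) : (L ≃ₐ[K] L) →* ℤˣ :=
  (mulEquivOfPrimeCardEq (card_algEquiv_of_finrank_eq_two hdeg)
    (Nat.card_eq_fintype_card.trans Fintype.card_units_int)).toMonoidHom

theorem galSign_surjective [Finite L] (hdeg : Module.finrank K L = 2) :
    Function.Surjective (galSign hdeg) :=
  MulEquiv.surjective _

variable [Fintype L]

theorem quadraticChar_toUnitHom_galUnitsHom [DecidableEq L] (τ : L ≃ₐ[K] L) (u : Lˣ) :
    (quadraticChar L).toUnitHom (galUnitsHom K L τ u) = (quadraticChar L).toUnitHom u :=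
  Units.ext <| by
    rw [MulChar.coe_toUnitHom, MulChar.coe_toUnitHom]
    exact quadraticChar_ringEquiv_apply τ.toRingEquiv u

noncomputable def twistedQuadraticChar [DecidableEq L] (hdeg : Module.finrank K L = 2) :
    Lˣ ⋊[galUnitsHom K L] (L ≃ₐ[K] L) →* ℤˣ :=
  SemidirectProduct.liftComm (quadraticChar L).toUnitHom (galSign hdeg)
    quadraticChar_toUnitHom_galUnitsHom

variable [DecidableEq L] (hdeg : Module.finrank K L = 2)
include hdeg

theorem card_ker_twistedQuadraticChar :
    Nat.card (twistedQuadraticChar hdeg).ker = Fintype.card L - 1 := by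
  have := SemidirectProduct.card_ker_liftComm_mul
    (hχ := quadraticChar_toUnitHom_galUnitsHom) (galSign_surjective hdeg)
  rw [Nat.card_units, Nat.card_eq_fintype_card (α := L), card_algEquiv_of_finrank_eq_two hdeg,
    Nat.card_eq_fintype_card (α := ℤˣ), Fintype.card_units_int] at this
  exact Nat.eq_of_mul_eq_mul_right two_pos this

theorem exists_mem_ker_twistedQuadraticChar_mul_apply_eq {x y : L} (hx : x ≠ 0) (hy : y ≠ 0) :
    ∃ g ∈ (twistedQuadraticChar hdeg).ker, (g.left : L) * g.right x = y := by
  obtain ⟨g, hg, hgxy⟩ := SemidirectProduct.exists_mem_ker_liftComm_left_mul_eq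
    (hχ := quadraticChar_toUnitHom_galUnitsHom) (galSign_surjective hdeg)
    (Units.mk0 x hx) (Units.mk0 y hy)
  exact ⟨g, hg, congrArg Units.val hgxy⟩

theorem ker_twistedQuadraticChar_not_le_range_inl (hL : ringChar L ≠ 2) :
    ¬ (twistedQuadraticChar hdeg).ker ≤
      (SemidirectProduct.inl : Lˣ →* Lˣ ⋊[galUnitsHom K L] (L ≃ₐ[K] L)).range :=
  have : Nontrivial (L ≃ₐ[K] L) :=
    Finite.one_lt_card_iff_nontrivial.mp (card_algEquiv_of_finrank_eq_two hdeg ▸ one_lt_two)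
  SemidirectProduct.ker_liftComm_not_le_range_inl (quadraticChar_toUnitHom_surjective hL)

variable [Fintype K]

theorem scalarSubgroup_le_ker_twistedQuadraticChar :
    scalarSubgroup K L ≤ (twistedQuadraticChar hdeg).ker := by
  rintro _ ⟨c, rfl⟩
  rw [MonoidHom.mem_ker, MonoidHom.comp_apply, twistedQuadraticChar,
    SemidirectProduct.liftComm_inl]
  refine Units.ext ?_
  rw [MulChar.coe_toUnitHom, Units.val_one, quadraticChar_one_iff_isSquare]
  · exact FiniteField.isSquare_algebraMap_of_finrank_eq_two hdeg c
  · exact (map_ne_zero (algebraMap K L)).mpr c.ne_zero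

theorem isNilpotent_ker_twistedQuadraticChar {k : ℕ} (hk : Fintype.card K + 1 = 2 ^ k) :
    Group.IsNilpotent (twistedQuadraticChar hdeg).ker := by
  have hZ := scalarSubgroup_le_ker_twistedQuadraticChar hdeg
  refine isNilpotent_of_le_center_of_card_eq (Z := (scalarSubgroup K L).subgroupOf _) (p := 2)
    (k := k) (fun a ha ↦ Subgroup.mem_center_iff.mpr fun b ↦
      Subtype.ext (Subgroup.mem_center_iff.mp (scalarSubgroup_le_center ha) b)) ?_
  rw [Nat.card_congr (Subgroup.subgroupOfEquivOfLe hZ).toEquiv, card_scalarSubgroup,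
    card_ker_twistedQuadraticChar, FiniteField.card_eq_sq_of_finrank_eq_two hdeg, ← hk]
  obtain ⟨r, hr⟩ : ∃ r, Fintype.card K = r + 1 :=
    ⟨_, (Nat.succ_pred_eq_of_pos Fintype.card_pos).symm⟩
  rw [hr, Nat.add_sub_cancel]
  exact Nat.sub_eq_of_eq_add (by ring)

end QuadraticExtension

theorem exists_nilpotent_line_transitive_of_mersenne_general {K L : Type*} [Field K]
    [Field L] [Algebra K L] [Fintype K] [Fintype L] (q : ℕ)
    (hq : Fintype.card K = q)
    (hmersenne : ∃ k : ℕ, q + 1 = 2 ^ k)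
    (hdeg : Module.finrank K L = 2) :
    ∃ A : Subgroup (Lˣ ⋊[galUnitsHom K L] (L ≃ₐ[K] L)),
      ((SemidirectProduct.inl :
          Lˣ →* Lˣ ⋊[galUnitsHom K L] (L ≃ₐ[K] L)).comp
        (Units.map (algebraMap K L).toMonoidHom)).range ≤ A ∧
      Group.IsNilpotent ↥A ∧
      Nat.card ↥A = q ^ 2 - 1 ∧
      ¬ A ≤ (SemidirectProduct.inl :
              Lˣ →* Lˣ ⋊[galUnitsHom K L] (L ≃ₐ[K] L)).range ∧
      ∀ x y : L, x ≠ 0 → y ≠ 0 → ∃ g ∈ A,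
        Submodule.span K {(g.left : L) * g.right x} = Submodule.span K {y} := by
  classical
  subst hq
  obtain ⟨k, hk⟩ := hmersenne
  have hodd : Odd (Fintype.card K) := by
    rcases k with _ | k
    · have := Fintype.one_lt_card (α := K)
      omega
    · rw [pow_succ] at hk
      exact Nat.odd_iff.mpr (by omega)
  have hL : ringChar L ≠ 2 := by
    rw [Ne, FiniteField.even_card_iff_char_two, FiniteField.card_eq_sq_of_finrank_eq_two hdeg,
      Nat.odd_iff.mp hodd.pow]
    exact one_ne_zero
  refine ⟨(twistedQuadraticChar hdeg).ker, scalarSubgroup_le_ker_twistedQuadraticChar hdeg,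
    isNilpotent_ker_twistedQuadraticChar hdeg hk, ?_,
    ker_twistedQuadraticChar_not_le_range_inl hdeg hL, fun x y hx hy ↦ ?_⟩
  · rw [card_ker_twistedQuadraticChar, FiniteField.card_eq_sq_of_finrank_eq_two hdeg]
  · obtain ⟨g, hg, hgxy⟩ := exists_mem_ker_twistedQuadraticChar_mul_apply_eq hdeg hx hy
    exact ⟨g, hg, by rw [hgxy]⟩

/-- Part of Lemma 6.3(ii): if `q` is a Mersenne prime and `L/K` is a degree-2
extension of finite fields with `|K| = q`, then `ΓL₁(q²) = Lˣ ⋊ Gal(L/K)` has a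
nilpotent subgroup `A` of order `q² - 1` containing the scalars `Kˣ`, not
contained in the canonical copy of `Lˣ`, which is transitive on the
1-dimensional `K`-subspaces of `L`. -/
theorem exists_nilpotent_line_transitive_of_mersenne {K L : Type*} [Field K]
    [Field L] [Algebra K L] [Fintype K] [Fintype L] (q : ℕ)
    (hq : Fintype.card K = q) (hprime : q.Prime)
    (hmersenne : ∃ k : ℕ, q + 1 = 2 ^ k)
    (hdeg : Module.finrank K L = 2) :
    ∃ A : Subgroup (Lˣ ⋊[galUnitsHom K L] (L ≃ₐ[K] L)),
      ((SemidirectProduct.inl :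
          Lˣ →* Lˣ ⋊[galUnitsHom K L] (L ≃ₐ[K] L)).comp
        (Units.map (algebraMap K L).toMonoidHom)).range ≤ A ∧
      Group.IsNilpotent ↥A ∧
      Nat.card ↥A = q ^ 2 - 1 ∧
      ¬ A ≤ (SemidirectProduct.inl :
              Lˣ →* Lˣ ⋊[galUnitsHom K L] (L ≃ₐ[K] L)).range ∧
      ∀ x y : L, x ≠ 0 → y ≠ 0 → ∃ g ∈ A,
        Submodule.span K {(g.left : L) * g.right x} = Submodule.span K {y} :=
  exists_nilpotent_line_transitive_of_mersenne_general q hq hmersenne hdeg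
end
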